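/- For δ ∈ (0,1) define two probability distributions on {0,1} × {a,b} × {a,b}: P₁(δ) puts mass 1/4 on (0,a,a), 1/4 on (0,b,b), (1+δ)/4 on (1,a,b), (1−δ)/4 on (1,b,a); P₂(δ) puts mass (1+δ)/(4−2δ²) on (0,a,a), (1−δ)/(4−2δ²) on (0,b,b), (1−δ²)/(4−2δ²) on (1,a,b), (1−δ²)/(4−2δ²) on (1,b,a). Consider the mixture in which a label j ∈ {1,2} is drawn uniformly and then (ω, s₁, s₂) is drawn from P_j(δ), and let x_i = P_j(ω = 1 | s_i) denote expert i's posterior computed within the realized structure P_j(δ). Then: (a) there exists a function d : {1,2} × [0,1]² → {0,1} with d(j, x₁, x₂) = ω almost surely under the mixture; and (b) for every ε > 0 there exists δ₀ > 0 such that for all δ ∈ (0, δ₀) and every function f : [0,1]² → [0,1], the expected square loss E[(f(x₁, x₂) − ω)²] under the mixture is at least 1/4 − ε. -/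

import Mathlib

noncomputable section

/-- The information structure `P₁(δ)` (signals: `false = a`, `true = b`). -/
def PA (δ : ℝ) (w s₁ s₂ : Bool) : ℝ :=
  if w = false ∧ s₁ = s₂ then 1/4
  else if w = true ∧ s₁ = false ∧ s₂ = true then (1 + δ)/4
  else if w = true ∧ s₁ = true ∧ s₂ = false then (1 - δ)/4
  else 0

/-- The information structure `P₂(δ)`. -/
def PB (δ : ℝ) (w s₁ s₂ : Bool) : ℝ :=
  if w = false ∧ s₁ = false ∧ s₂ = false then (1 + δ)/(4 - 2*δ^2)
  else if w = false ∧ s₁ = true ∧ s₂ = true then (1 - δ)/(4 - 2*δ^2)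
  else if w = true ∧ s₁ ≠ s₂ then (1 - δ^2)/(4 - 2*δ^2)
  else 0

/-- Expert 1's posterior `P(ω=1 | s₁ = t)` within the structure `q`. -/
def post1 (q : Bool → Bool → Bool → ℝ) (t : Bool) : ℝ :=
  (∑ s₂ : Bool, q true t s₂) / (∑ w : Bool, ∑ s₂ : Bool, q w t s₂)

/-- Expert 2's posterior `P(ω=1 | s₂ = t)` within the structure `q`. -/
def post2 (q : Bool → Bool → Bool → ℝ) (t : Bool) : ℝ :=
  (∑ s₁ : Bool, q true s₁ t) / (∑ w : Bool, ∑ s₁ : Bool, q w s₁ t)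

/-- The expected square loss of `f` under the uniform mixture of `P₁(δ)` and `P₂(δ)`,
where `f` is applied to the experts' posteriors computed within the realized structure. -/
def mixLoss (δ : ℝ) (f : ℝ → ℝ → ℝ) : ℝ :=
  (1/2) * (∑ w : Bool, ∑ s₁ : Bool, ∑ s₂ : Bool,
      PA δ w s₁ s₂ * (f (post1 (PA δ) s₁) (post2 (PA δ) s₂) - (if w then 1 else 0))^2)
  + (1/2) * (∑ w : Bool, ∑ s₁ : Bool, ∑ s₂ : Bool,
      PB δ w s₁ s₂ * (f (post1 (PB δ) s₁) (post2 (PB δ) s₂) - (if w then 1 else 0))^2)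

/-
In both structures each expert's posterior takes only the two values `forecast δ` and
`forecast (-δ)`. Under `P₁(δ)` the state is `1` exactly when the two forecasts agree, under
`P₂(δ)` exactly when they differ, so the structure label decides the state. Without the label,
each of the four forecast profiles carries state `0` in one structure and state `1` in the other,
both with mixture mass at least `(1 - δ) / 8`; whatever value `v` an aggregator reports there, it
loses at least `(1 - δ) / 16`, for a total loss of at least `(1 - δ) / 4`.
-/

def forecast (δ : ℝ) : ℝ := (1 + δ) / (2 + δ)

lemma forecast_neg_ne {δ : ℝ} (h0 : 0 < δ) (h2 : δ < 2) : forecast (-δ) ≠ forecast δ := by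
  rw [forecast, forecast, Ne, div_eq_div_iff (by linarith) (by linarith)]
  intro h
  linarith

lemma le_mul_sq_add_mul_sub_one_sq {m p q : ℝ} (hm : 0 ≤ m) (hp : m ≤ p) (hq : m ≤ q) (v : ℝ) :
    m / 2 ≤ p * v ^ 2 + q * (v - 1) ^ 2 := by
  nlinarith [mul_le_mul_of_nonneg_right hp (sq_nonneg v),
    mul_le_mul_of_nonneg_right hq (sq_nonneg (v - 1)), mul_nonneg hm (sq_nonneg (2 * v - 1))]

section

variable {δ : ℝ}

lemma post1_PA (h0 : 0 < δ) (h1 : δ < 1) (t : Bool) :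
    post1 (PA δ) t = forecast (if t then -δ else δ) := by
  have : 2 + δ ≠ 0 := by linarith
  have : 2 - δ ≠ 0 := by linarith
  cases t <;> simp [post1, PA, forecast] <;> field_simp <;> ring

lemma post2_PA (h0 : 0 < δ) (h1 : δ < 1) (t : Bool) :
    post2 (PA δ) t = forecast (if t then δ else -δ) := by
  have : 2 + δ ≠ 0 := by linarith
  have : 2 - δ ≠ 0 := by linarith
  cases t <;> simp [post2, PA, forecast] <;> field_simp <;> ring

lemma post1_PB (h0 : 0 < δ) (h1 : δ < 1) (t : Bool) :
    post1 (PB δ) t = forecast (if t then δ else -δ) := by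
  have hD : 4 - 2 * δ ^ 2 ≠ 0 := by nlinarith
  cases t <;> norm_num [post1, PB, forecast, Fintype.sum_bool] <;>
    rw [← add_div, div_div_div_cancel_right₀ hD, div_eq_div_iff (by nlinarith) (by linarith)] <;>
    ring

lemma post2_PB (h0 : 0 < δ) (h1 : δ < 1) (t : Bool) :
    post2 (PB δ) t = forecast (if t then δ else -δ) := by
  have hD : 4 - 2 * δ ^ 2 ≠ 0 := by nlinarith
  cases t <;> norm_num [post2, PB, forecast, Fintype.sum_bool] <;>
    rw [← add_div, div_div_div_cancel_right₀ hD, div_eq_div_iff (by nlinarith) (by linarith)] <;>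
    ring

lemma exists_decision_rule (h0 : 0 < δ) (h1 : δ < 1) :
    ∃ d : Bool → ℝ → ℝ → ℝ,
      (∀ j a b, d j a b = 0 ∨ d j a b = 1) ∧
      (∀ w s₁ s₂ : Bool, 0 < PA δ w s₁ s₂ →
          d false (post1 (PA δ) s₁) (post2 (PA δ) s₂) = (if w then 1 else 0)) ∧
      (∀ w s₁ s₂ : Bool, 0 < PB δ w s₁ s₂ →
          d true (post1 (PB δ) s₁) (post2 (PB δ) s₂) = (if w then 1 else 0)) := by
  have hne := forecast_neg_ne h0 (by linarith)
  refine ⟨fun j a b => if (a = b ↔ j = false) then 1 else 0, fun j a b => ?_, ?_, ?_⟩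
  · by_cases h : a = b ↔ j = false <;> simp [h]
  · intro w s₁ s₂ hp
    cases w <;> cases s₁ <;> cases s₂ <;> simp [PA] at hp <;>
      simp [post1_PA h0 h1, post2_PA h0 h1, hne, hne.symm]
  · intro w s₁ s₂ hp
    cases w <;> cases s₁ <;> cases s₂ <;> simp [PB] at hp <;>
      simp [post1_PB h0 h1, post2_PB h0 h1, hne, hne.symm]

lemma mixLoss_ge (h0 : 0 < δ) (h1 : δ < 1) (f : ℝ → ℝ → ℝ) : (1 - δ) / 4 ≤ mixLoss δ f := by
  set D := 4 - 2 * δ ^ 2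
  have hD : 0 < D := by nlinarith
  have hm : 0 ≤ (1 - δ) / 4 := by linarith
  have hdiv : ∀ c, (1 - δ) / 4 * D ≤ c → (1 - δ) / 4 ≤ c / D := fun c hc => (le_div_iff₀ hD).2 hc
  set lo := forecast (-δ)
  set hi := forecast δ
  have hcells : mixLoss δ f = 1 / 2 *
      ((1 / 4 * f hi lo ^ 2 + (1 - δ ^ 2) / D * (f hi lo - 1) ^ 2)
        + (1 / 4 * f lo hi ^ 2 + (1 - δ ^ 2) / D * (f lo hi - 1) ^ 2)
        + ((1 - δ) / D * f hi hi ^ 2 + (1 + δ) / 4 * (f hi hi - 1) ^ 2)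
        + ((1 + δ) / D * f lo lo ^ 2 + (1 - δ) / 4 * (f lo lo - 1) ^ 2)) := by
    simp [mixLoss, PA, PB, post1_PA h0 h1, post2_PA h0 h1,
      post1_PB h0 h1, post2_PB h0 h1, lo, hi, D]
    ring
  have hB : (1 - δ) / 4 ≤ (1 - δ ^ 2) / D := hdiv _ (by nlinarith)
  have hA : (1 - δ) / 4 ≤ 1 / 4 := by linarith
  have c₁ := le_mul_sq_add_mul_sub_one_sq hm hA hB (f hi lo)
  have c₂ := le_mul_sq_add_mul_sub_one_sq hm hA hB (f lo hi)
  have c₃ := le_mul_sq_add_mul_sub_one_sq hm (hdiv (1 - δ) (by nlinarith))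
    (by linarith : (1 - δ) / 4 ≤ (1 + δ) / 4) (f hi hi)
  have c₄ := le_mul_sq_add_mul_sub_one_sq hm (hdiv (1 + δ) (by nlinarith)) le_rfl (f lo lo)
  linarith

end

/-- Proposition 3: (a) a decision rule knowing the realized structure and the
two forecasts determines the state a.s.; (b) any aggregation scheme using the forecasts
alone suffers square loss at least `1/4 - ε` under the mixture, for small `δ`. -/
theorem stmt_10 :
    (∀ δ : ℝ, δ ∈ Set.Ioo (0:ℝ) 1 →
      ∃ d : Bool → ℝ → ℝ → ℝ,
        (∀ j a b, d j a b = 0 ∨ d j a b = 1) ∧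
        (∀ w s₁ s₂ : Bool, 0 < PA δ w s₁ s₂ →
            d false (post1 (PA δ) s₁) (post2 (PA δ) s₂) = (if w then 1 else 0)) ∧
        (∀ w s₁ s₂ : Bool, 0 < PB δ w s₁ s₂ →
            d true (post1 (PB δ) s₁) (post2 (PB δ) s₂) = (if w then 1 else 0))) ∧
    (∀ ε : ℝ, 0 < ε → ∃ δ₀ : ℝ, 0 < δ₀ ∧
      ∀ δ : ℝ, δ ∈ Set.Ioo (0:ℝ) δ₀ →
      ∀ f : ℝ → ℝ → ℝ,
        (∀ a b : ℝ, a ∈ Set.Icc (0:ℝ) 1 → b ∈ Set.Icc (0:ℝ) 1 → f a b ∈ Set.Icc (0:ℝ) 1) →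
        mixLoss δ f ≥ 1/4 - ε) := by
  refine ⟨fun δ ⟨h0, h1⟩ => exists_decision_rule h0 h1, fun ε hε => ⟨min ε 1, by positivity, ?_⟩⟩
  rintro δ ⟨h0, hδ⟩ f -
  have hδε : δ < ε := hδ.trans_le (min_le_left _ _)
  have := mixLoss_ge h0 (hδ.trans_le (min_le_right _ _)) f
  linarith
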